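/- arXiv:2405.00561 — 4 statements merged into one kernel-verified Lean document; each statement's English description precedes it below -/
import Mathlib

section
/- Let A be a finite set, u : A → [0,∞), γ ∈ (0,1]. For an infinite history (a_t), define the block average payoff W_γ(a, t₁, t₂) = (1/(t₂−t₁))·Σ_{s=t₁+1}^{t₂} (1 − γ·φ(a_s | a^{s−1}))·u(a_s), the within-block frequency p(a) = (1/(t₂−t₁))·Σ_{s=t₁+1}^{t₂} 1[a_s = a], and the approximation Ũ_γ(a, t₁, t₂) = Σ_{a∈A} p(a)·(1 − γ·φ(a | a^{t₁}))·u(a). Then |W_γ(a, t₁, t₂) − Ũ_γ(a, t₁, t₂)| ≤ 2·((t₂−t₁)/t₁)·γ·Σ_{a∈A} u(a) for all 1 ≤ t₁ < t₂. -/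
/-!
Replacing the running frequency `φ(a_s | a^{s-1})` by `φ(a_s | a^{t₁})`, the frequency at the
start of the block, turns the block average `W` exactly into `Ũ` (regroup the block sum by
actions). Between times `t₁` and `t ≤ t₂` only `t - t₁` periods are added, so a frequency moves by
at most `(t - t₁)/t ≤ (t₂ - t₁)/t₁`; each summand therefore changes by at most
`γ (t₂ - t₁)/t₁ · u(a_s)`, and `∑_s u(a_s) ≤ (t₂ - t₁) ∑_b u b`.
-/

open Finset

/-- Empirical frequency of action `b` in the first `t` periods of history `a`. -/
noncomputable def freq {A : Type*} [DecidableEq A] (a : ℕ → A) (b : A) (t : ℕ) : ℝ :=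
  if t = 0 then 0 else (∑ s ∈ Finset.Icc 1 t, if a s = b then (1 : ℝ) else 0) / t

/-- Average fatigued payoff within the block from `t₁+1` to `t₂`. -/
noncomputable def blockW {A : Type*} [DecidableEq A] (u : A → ℝ) (γ : ℝ) (a : ℕ → A)
    (t₁ t₂ : ℕ) : ℝ :=
  (∑ s ∈ Finset.Icc (t₁ + 1) t₂, (1 - γ * freq a (a s) (s - 1)) * u (a s)) / ((t₂ : ℝ) - t₁)

/-- Within-block frequency of action `b` in the block from `t₁+1` to `t₂`. -/
noncomputable def blockP {A : Type*} [DecidableEq A] (a : ℕ → A) (b : A) (t₁ t₂ : ℕ) : ℝ :=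
  (∑ s ∈ Finset.Icc (t₁ + 1) t₂, if a s = b then (1 : ℝ) else 0) / ((t₂ : ℝ) - t₁)

/-- Approximation of the block average payoff using the frequencies at time `t₁`. -/
noncomputable def blockU {A : Type*} [Fintype A] [DecidableEq A] (u : A → ℝ) (γ : ℝ)
    (a : ℕ → A) (t₁ t₂ : ℕ) : ℝ :=
  ∑ b : A, blockP a b t₁ t₂ * (1 - γ * freq a b t₁) * u b

lemma abs_div_sub_div_le_of_le {c₁ c n₁ n : ℝ} (hn₁ : 0 < n₁) (hn : n₁ ≤ n)
    (hc₁ : 0 ≤ c₁) (hc₁n₁ : c₁ ≤ n₁) (hc : c₁ ≤ c) (hcn : c - c₁ ≤ n - n₁) :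
    |c₁ / n₁ - c / n| ≤ (n - n₁) / n := by
  have hn₀ : 0 < n := hn₁.trans_le hn
  have hratio : c₁ / n₁ ≤ 1 := (div_le_one hn₁).2 hc₁n₁
  have hsplit : c₁ / n₁ - c / n = (c₁ / n₁ * (n - n₁) - (c - c₁)) / n := by
    field_simp
    ring
  rw [hsplit, abs_div, abs_of_pos hn₀]
  gcongr
  exact abs_sub_le_of_nonneg_of_le (by positivity)
    (mul_le_of_le_one_left (by linarith) hratio) (by linarith) hcn

section Visits

variable {A : Type*} [DecidableEq A]

def visits (a : ℕ → A) (b : A) (t : ℕ) : ℕ := #{s ∈ Icc 1 t | a s = b}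

lemma freq_eq_visits_div (a : ℕ → A) (b : A) (t : ℕ) :
    freq a b t = visits a b t / t := by
  unfold freq visits
  split_ifs with ht
  · simp [ht]
  · rw [sum_boole]

lemma visits_le (a : ℕ → A) (b : A) (t : ℕ) : visits a b t ≤ t :=
  (card_filter_le _ _).trans (by simp)

lemma visits_mono (a : ℕ → A) (b : A) : Monotone (visits a b) := fun _ _ h =>
  card_le_card (filter_subset_filter _ (Icc_subset_Icc_right h))

lemma visits_le_visits_add (a : ℕ → A) (b : A) (t₁ t : ℕ) :
    visits a b t ≤ visits a b t₁ + (t - t₁) := by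
  have hcover : Icc 1 t ⊆ Icc 1 t₁ ∪ Ioc t₁ t := by
    intro s
    simp only [mem_union, mem_Icc, mem_Ioc]
    omega
  calc visits a b t ≤ #{s ∈ Icc 1 t₁ ∪ Ioc t₁ t | a s = b} :=
        card_le_card (filter_subset_filter _ hcover)
    _ ≤ visits a b t₁ + #(Ioc t₁ t) := by
        rw [filter_union]
        exact (card_union_le _ _).trans (Nat.add_le_add_left (card_filter_le _ _) _)
    _ = visits a b t₁ + (t - t₁) := by rw [Nat.card_Ioc]

lemma abs_freq_sub_freq_le (a : ℕ → A) (b : A) {t₁ t : ℕ} (ht₁ : 0 < t₁) (h : t₁ ≤ t) :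
    |freq a b t₁ - freq a b t| ≤ ((t : ℝ) - t₁) / t := by
  rw [freq_eq_visits_div, freq_eq_visits_div]
  have hgrowth : (visits a b t : ℝ) - visits a b t₁ ≤ (t : ℝ) - t₁ := by
    have : (visits a b t : ℝ) ≤ visits a b t₁ + ((t - t₁ : ℕ) : ℝ) := by
      exact_mod_cast visits_le_visits_add a b t₁ t
    rw [Nat.cast_sub h] at this
    linarith
  exact abs_div_sub_div_le_of_le (by exact_mod_cast ht₁) (by exact_mod_cast h) (by positivity)
    (by exact_mod_cast visits_le a b t₁) (by exact_mod_cast visits_mono a b h) hgrowth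

lemma abs_freq_sub_freq_le_of_mem_Icc (a : ℕ → A) (b : A) {t₁ t₂ s : ℕ} (ht₁ : 0 < t₁)
    (hs : s ∈ Icc (t₁ + 1) t₂) :
    |freq a b t₁ - freq a b (s - 1)| ≤ ((t₂ : ℝ) - t₁) / t₁ := by
  rw [mem_Icc] at hs
  have hs₁ : (t₁ : ℝ) ≤ ((s - 1 : ℕ) : ℝ) := by exact_mod_cast (by omega : t₁ ≤ s - 1)
  have hs₂ : ((s - 1 : ℕ) : ℝ) ≤ t₂ := by exact_mod_cast (by omega : s - 1 ≤ t₂)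
  refine (abs_freq_sub_freq_le a b ht₁ (by omega)).trans ?_
  gcongr
  linarith

end Visits

lemma sum_comp_le_card_mul_sum {ι A : Type*} [Fintype A] (I : Finset ι) (f : ι → A) {u : A → ℝ}
    (hu : ∀ x, 0 ≤ u x) : ∑ i ∈ I, u (f i) ≤ #I * ∑ b : A, u b := by
  rw [← nsmul_eq_mul]
  exact sum_le_card_nsmul _ _ _ fun i _ => single_le_sum (fun b _ => hu b) (mem_univ (f i))

section Block

variable {A : Type*} [Fintype A] [DecidableEq A]

lemma sum_blockP_mul (a : ℕ → A) (t₁ t₂ : ℕ) (g : A → ℝ) :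
    ∑ b : A, blockP a b t₁ t₂ * g b = (∑ s ∈ Icc (t₁ + 1) t₂, g (a s)) / ((t₂ : ℝ) - t₁) := by
  simp only [blockP, div_mul_eq_mul_div, sum_mul, ← sum_div, ite_mul, one_mul, zero_mul]
  rw [sum_comm]
  simp [sum_ite_eq]

lemma blockW_sub_blockU (u : A → ℝ) (γ : ℝ) (a : ℕ → A) (t₁ t₂ : ℕ) :
    blockW u γ a t₁ t₂ - blockU u γ a t₁ t₂ =
      γ * (∑ s ∈ Icc (t₁ + 1) t₂, (freq a (a s) t₁ - freq a (a s) (s - 1)) * u (a s)) /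
        ((t₂ : ℝ) - t₁) := by
  have hU : blockU u γ a t₁ t₂ =
      (∑ s ∈ Icc (t₁ + 1) t₂, (1 - γ * freq a (a s) t₁) * u (a s)) / ((t₂ : ℝ) - t₁) := by
    simp only [blockU, mul_assoc]
    exact sum_blockP_mul a t₁ t₂ fun b => (1 - γ * freq a b t₁) * u b
  rw [hU, blockW, ← sub_div, ← sum_sub_distrib, mul_sum]
  congr 1
  exact sum_congr rfl fun _ _ => by ring

end Block

theorem stmt1 {A : Type*} [Fintype A] [DecidableEq A]
    (u : A → ℝ) (hu : ∀ x, 0 ≤ u x) (γ : ℝ) (hγ : 0 < γ ∧ γ ≤ 1)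
    (a : ℕ → A) (t₁ t₂ : ℕ) (ht₁ : 1 ≤ t₁) (ht₂ : t₁ < t₂) :
    |blockW u γ a t₁ t₂ - blockU u γ a t₁ t₂| ≤
      2 * (((t₂ : ℝ) - t₁) / t₁) * γ * ∑ b : A, u b := by
  set n : ℝ := (t₂ : ℝ) - t₁
  have hn : 0 < n := sub_pos.2 (by exact_mod_cast ht₂)
  have hcard : (#(Icc (t₁ + 1) t₂) : ℝ) = n := by
    rw [Nat.card_Icc, Nat.add_sub_add_right, Nat.cast_sub ht₂.le]
  have hpayoffs : ∑ s ∈ Icc (t₁ + 1) t₂, u (a s) ≤ n * ∑ b : A, u b := by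
    rw [← hcard]
    exact sum_comp_le_card_mul_sum _ a hu
  have hγ₀ : 0 ≤ γ := hγ.1.le
  have hS : 0 ≤ ∑ b : A, u b := sum_nonneg fun b _ => hu b
  rw [blockW_sub_blockU, abs_div, abs_mul, abs_of_pos hγ.1, abs_of_pos hn, div_le_iff₀ hn]
  calc γ * |∑ s ∈ Icc (t₁ + 1) t₂, (freq a (a s) t₁ - freq a (a s) (s - 1)) * u (a s)|
      ≤ γ * ∑ s ∈ Icc (t₁ + 1) t₂, n / t₁ * u (a s) := by
        gcongr
        refine (abs_sum_le_sum_abs _ _).trans (sum_le_sum fun s hs => ?_)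
        rw [abs_mul, abs_of_nonneg (hu _)]
        exact mul_le_mul_of_nonneg_right (abs_freq_sub_freq_le_of_mem_Icc a _ ht₁ hs) (hu _)
    _ ≤ γ * (n / t₁ * (n * ∑ b : A, u b)) := by
        rw [← mul_sum]
        gcongr
    _ ≤ 2 * (n / t₁) * γ * (∑ b : A, u b) * n := by
        have : 0 ≤ n / t₁ * γ * (∑ b : A, u b) * n :=
          mul_nonneg (mul_nonneg (mul_nonneg (by positivity) hγ₀) hS) hn.le
        linarith
end

section
/- Let A be a finite set, u : A → [0,∞), and γ ∈ (0,1]. Suppose a nonempty subset A* ⊆ A and nonnegative reals (f_a)_{a∈A*} with Σ_{a∈A*} f_a = 1 satisfy (1 − γ f_a)·u(a) = (1 − γ f_b)·u(b) for all a,b ∈ A*, where u(a) > 0 for all a ∈ A*. Then for every a ∈ A*, f_a = (γ − |A*| + Σ_{b∈A*} u(a)/u(b)) / (γ · Σ_{b∈A*} u(a)/u(b)). -/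
open Finset

theorem stmt2 {A : Type*} [Fintype A] [DecidableEq A]
    (u : A → ℝ) (hu : ∀ x, 0 ≤ u x) (γ : ℝ) (hγ : 0 < γ ∧ γ ≤ 1)
    (S : Finset A) (hS : S.Nonempty) (huS : ∀ a ∈ S, 0 < u a)
    (f : A → ℝ) (hf : ∀ a ∈ S, 0 ≤ f a) (hsum : ∑ a ∈ S, f a = 1)
    (heq : ∀ a ∈ S, ∀ b ∈ S, (1 - γ * f a) * u a = (1 - γ * f b) * u b) :
    ∀ a ∈ S, f a = (γ - (S.card : ℝ) + ∑ b ∈ S, u a / u b) / (γ * ∑ b ∈ S, u a / u b) := by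
  intro a ha
  have hγ0 := hγ.1
  set c := (1 - γ * f a) * u a with hc
  have hfb : ∀ b ∈ S, γ * f b = 1 - c / u b := by
    intro b hbS
    have hub := (huS b hbS).ne'
    have h := heq a ha b hbS
    rw [← hc] at h
    field_simp
    nlinarith [h]
  set s := ∑ b ∈ S, 1 / u b with hs
  have hspos : 0 < s := by
    apply Finset.sum_pos (fun b hb => one_div_pos.mpr (huS b hb)) hS
  have hcs : c * s = (S.card : ℝ) - γ := by
    have h1 : ∑ b ∈ S, γ * f b = ∑ b ∈ S, (1 - c / u b) :=
      Finset.sum_congr rfl hfb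
    rw [← Finset.mul_sum, hsum, mul_one, Finset.sum_sub_distrib,
      Finset.sum_const, nsmul_eq_mul, mul_one] at h1
    have h2 : ∑ b ∈ S, c / u b = c * s := by
      rw [hs, Finset.mul_sum]
      exact Finset.sum_congr rfl fun b hb => by
        rw [div_eq_mul_one_div]
    rw [h2] at h1
    linarith
  have hT : ∑ b ∈ S, u a / u b = u a * s := by
    rw [hs, Finset.mul_sum]
    exact Finset.sum_congr rfl fun b hb => by rw [div_eq_mul_one_div]
  rw [hT]
  have hua := huS a ha
  have hfa := hfb a ha
  have huane := hua.ne'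
  rw [eq_div_iff (by positivity)]
  have : c / u a * (u a * s) = c * s := by field_simp
  nlinarith [hfa, this, hcs]
end

section
/- Let A = {a₁,...,a_m} with u(a₁) ≥ u(a₂) ≥ ... ≥ u(a_m) > 0, and for γ ∈ (0,1] let x_γ ∈ Δ(A) be the unique maximizer of Σ_i x(a_i)(1 − γ x(a_i))u(a_i). Suppose the support of x_γ is A* = {a₁,...,a_{k*}} and x_γ is differentiable in γ on the support. Then for every k = 1,...,m, Σ_{i=1}^k (d/dγ) x_γ(a_i) ≤ 0. -/
/-!
At an optimum, shifting mass between two actions in the support cannot help, so the marginal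
values `u i * (1 - 2 * γ * x i)` agree on the support (a one-sided Fermat argument on the simplex).
Together with `∑ x i = 1` this pins `x_γ` down in closed form: with `S = ∑_{support} 1 / u i`,
`x_γ i = 1 / (S u i) + (1 - |A*| / (S u i)) / (2γ)`. Hence each prefix sum is `C + B / γ`, and
`B ≥ 0` by Chebyshev's sum inequality, since `1 / u` is increasing and the support prefix is an
initial segment. So prefix sums are antitone in `γ` and their derivative is nonpositive.
-/

open Finset

lemma hasDerivAt_mul_one_sub_mul_mul (γ c y : ℝ) :
    HasDerivAt (fun z => z * (1 - γ * z) * c) (c * (1 - 2 * γ * y)) y := by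
  have h := ((hasDerivAt_id' y).fun_mul
    (((hasDerivAt_id' y).const_mul γ).const_sub 1)).mul_const c
  exact h.congr_deriv (by ring)

section Simplex

variable {ι : Type*} [Fintype ι] [DecidableEq ι]

lemma add_smul_single_sub_single_mem_stdSimplex {x : ι → ℝ} (hx : x ∈ stdSimplex ℝ ι)
    {i : ι} (j : ι) {t : ℝ} (ht₀ : 0 ≤ t) (ht : t ≤ x i) :
    x + t • (Pi.single j 1 - Pi.single i 1) ∈ stdSimplex ℝ ι := by
  refine ⟨fun k => ?_, ?_⟩
  · have := hx.1 k
    by_cases hki : k = i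
    · subst hki
      by_cases hkj : k = j
      · subst hkj
        simpa using this
      · simpa [hkj] using ht
    · simp only [Pi.add_apply, Pi.smul_apply, Pi.sub_apply, Pi.single_apply, hki, if_false,
        sub_zero, smul_eq_mul]
      positivity
  · simp [sum_add_distrib, ← mul_sum, hx.2]

theorem IsMaxOn.marginal_le_of_stdSimplex {f : ι → ℝ → ℝ} {f' x : ι → ℝ}
    (hmax : IsMaxOn (fun y => ∑ k, f k (y k)) (stdSimplex ℝ ι) x) (hx : x ∈ stdSimplex ℝ ι)
    (hf : ∀ k, HasDerivAt (f k) (f' k) (x k)) {i : ι} (hi : 0 < x i) (j : ι) :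
    f' j ≤ f' i := by
  set v : ι → ℝ := Pi.single j 1 - Pi.single i 1 with hv
  have hφ : HasDerivAt (fun t => ∑ k, f k (x k + t * v k)) (∑ k, f' k * (1 * v k)) 0 :=
    HasDerivAt.fun_sum fun k _ =>
      (hf k).comp_of_eq 0 (((hasDerivAt_id (0 : ℝ)).mul_const (v k)).const_add (x k)) (by simp)
  have hφ' : ∑ k, f' k * (1 * v k) = f' j - f' i := by
    simp [hv, Pi.single_apply, mul_sub, sum_sub_distrib]
  rw [hφ'] at hφ
  have hloc : IsLocalMaxOn (fun t => ∑ k, f k (x k + t * v k)) (Set.Icc 0 (x i)) 0 :=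
    IsMaxOn.localize fun t ht => by
      simpa [hv] using hmax (add_smul_single_sub_single_mem_stdSimplex hx j ht.1 ht.2)
  have hcone : x i ∈ posTangentConeAt (Set.Icc 0 (x i)) (0 : ℝ) :=
    mem_posTangentConeAt_of_segment_subset (by simp [segment_eq_Icc hi.le])
  have h := hloc.hasFDerivWithinAt_nonpos hφ.hasDerivWithinAt.hasFDerivWithinAt hcone
  rw [ContinuousLinearMap.toSpanSingleton_apply, smul_eq_mul] at h
  exact sub_nonpos.1 (nonpos_of_mul_nonpos_right h hi)

theorem fatigue_marginal_eq_of_forall_le {γ : ℝ} {u x : ι → ℝ} (hx : x ∈ stdSimplex ℝ ι)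
    (hmax : ∀ y ∈ stdSimplex ℝ ι,
      ∑ i, y i * (1 - γ * y i) * u i ≤ ∑ i, x i * (1 - γ * x i) * u i)
    {i j : ι} (hi : 0 < x i) (hj : 0 < x j) :
    u i * (1 - 2 * γ * x i) = u j * (1 - 2 * γ * x j) := by
  have hmax' : IsMaxOn (fun y => ∑ k, (fun z => z * (1 - γ * z) * u k) (y k))
      (stdSimplex ℝ ι) x := isMaxOn_iff.2 hmax
  have hf := fun k => hasDerivAt_mul_one_sub_mul_mul γ (u k) (x k)
  exact le_antisymm (hmax'.marginal_le_of_stdSimplex hx hf hj i)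
    (hmax'.marginal_le_of_stdSimplex hx hf hi j)

end Simplex

section ClosedForm

variable {ι : Type*} [DecidableEq ι]

/-- The unique solution supported on `s` of `∑ x i = 1` with all marginal values
`u i * (1 - 2 * γ * x i)` equal on `s`. -/
noncomputable def optimalFreq (s : Finset ι) (u : ι → ℝ) (γ : ℝ) (i : ι) : ℝ :=
  if i ∈ s then
    ((∑ j ∈ s, (u j)⁻¹) * u i)⁻¹ + (1 - #s / ((∑ j ∈ s, (u j)⁻¹) * u i)) / (2 * γ)
  else 0

theorem eq_optimalFreq_of_marginal_eq {s : Finset ι} {u x : ι → ℝ} {γ : ℝ} (hγ : γ ≠ 0)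
    (hu : ∀ i ∈ s, 0 < u i) (hsum : ∑ i ∈ s, x i = 1) (hzero : ∀ i ∉ s, x i = 0)
    (hmarg : ∀ i ∈ s, ∀ j ∈ s, u i * (1 - 2 * γ * x i) = u j * (1 - 2 * γ * x j)) :
    x = optimalFreq s u γ := by
  obtain ⟨i₀, hi₀⟩ : s.Nonempty := nonempty_of_sum_ne_zero (by rw [hsum]; exact one_ne_zero)
  set L := u i₀ * (1 - 2 * γ * x i₀)
  set S := ∑ j ∈ s, (u j)⁻¹ with hSdef
  have hS : 0 < S := sum_pos (fun i hi => inv_pos.2 (hu i hi)) ⟨i₀, hi₀⟩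
  have hxL : ∀ i ∈ s, x i = (1 - L * (u i)⁻¹) / (2 * γ) := by
    intro i hi
    have := hmarg i hi i₀ hi₀
    have := (hu i hi).ne'
    field_simp
    linarith
  have hL : L = (#s - 2 * γ) / S := by
    have h : ∑ i ∈ s, x i = (#s - L * S) / (2 * γ) := by
      rw [sum_congr rfl hxL, ← sum_div, sum_sub_distrib, ← mul_sum, ← hSdef]
      simp
    rw [hsum] at h
    field_simp at h ⊢
    linarith
  ext i
  by_cases hi : i ∈ s
  · have := (hu i hi).ne'
    rw [optimalFreq, if_pos hi, ← hSdef, hxL i hi, hL]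
    field_simp
    ring
  · rw [optimalFreq, if_neg hi, hzero i hi]

variable [Fintype ι]

theorem eq_optimalFreq_of_forall_le {s : Finset ι} {u x : ι → ℝ} {γ : ℝ} (hγ : γ ≠ 0)
    (hu : ∀ i ∈ s, 0 < u i) (hx : x ∈ stdSimplex ℝ ι)
    (hmax : ∀ y ∈ stdSimplex ℝ ι,
      ∑ i, y i * (1 - γ * y i) * u i ≤ ∑ i, x i * (1 - γ * x i) * u i)
    (hsupp : ∀ i, 0 < x i ↔ i ∈ s) :
    x = optimalFreq s u γ := by
  have hzero : ∀ i ∉ s, x i = 0 := fun i hi =>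
    le_antisymm (not_lt.1 fun h => hi ((hsupp i).1 h)) (hx.1 i)
  refine eq_optimalFreq_of_marginal_eq hγ hu ?_ hzero fun i hi j hj =>
    fatigue_marginal_eq_of_forall_le hx hmax ((hsupp i).2 hi) ((hsupp j).2 hj)
  rw [← hx.2]
  exact sum_subset (subset_univ s) fun i _ hi => hzero i hi

theorem sum_filter_optimalFreq (s : Finset ι) (u : ι → ℝ) (γ : ℝ) (P : ι → Prop)
    [DecidablePred P] :
    ∑ i with P i, optimalFreq s u γ i =
      ∑ i ∈ s with P i, ((∑ j ∈ s, (u j)⁻¹) * u i)⁻¹ +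
        (∑ i ∈ s with P i, (1 - #s / ((∑ j ∈ s, (u j)⁻¹) * u i))) / (2 * γ) := by
  rw [sum_div, ← sum_add_distrib]
  simp only [optimalFreq]
  rw [← sum_filter, filter_filter]
  congr 1
  ext i
  simp [and_comm]

end ClosedForm

section Order

variable {ι : Type*} [LinearOrder ι]

theorem card_mul_sum_filter_inv_le {u : ι → ℝ} (hu : Antitone u) (hpos : ∀ i, 0 < u i)
    (s : Finset ι) {P : ι → Prop} [DecidablePred P] (hP : ∀ ⦃i j⦄, i ≤ j → P j → P i) :
    #s * ∑ i ∈ s with P i, (u i)⁻¹ ≤ #{i ∈ s | P i} * ∑ i ∈ s, (u i)⁻¹ := by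
  have hind : Antitone fun i => if P i then (1 : ℝ) else 0 := by
    intro i j hij
    by_cases hj : P j
    · simp [hj, hP hij hj]
    · simp only [hj, if_false]
      split_ifs <;> norm_num
  have hcheb := ((hind.antivary fun i j hij => inv_anti₀ (hpos j) (hu hij)).antivaryOn s
    ).card_mul_sum_le_sum_mul_sum
  simpa [sum_filter, ite_mul] using hcheb

variable [Fintype ι] [DecidableEq ι]

theorem antitoneOn_sum_filter_optimalFreq {u : ι → ℝ} (hu : Antitone u) (hpos : ∀ i, 0 < u i)
    (s : Finset ι) {P : ι → Prop} [DecidablePred P] (hP : ∀ ⦃i j⦄, i ≤ j → P j → P i) :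
    AntitoneOn (fun γ => ∑ i with P i, optimalFreq s u γ i) (Set.Ioi 0) := by
  set S := ∑ j ∈ s, (u j)⁻¹ with hSdef
  have hS : 0 ≤ S := sum_nonneg fun i _ => (inv_pos.2 (hpos i)).le
  have hslope : 0 ≤ ∑ i ∈ s with P i, (1 - #s / (S * u i)) := by
    have h : ∑ i ∈ s with P i, (1 - #s / (S * u i)) =
        #{i ∈ s | P i} - #s / S * ∑ i ∈ s with P i, (u i)⁻¹ := by
      rw [sum_sub_distrib, mul_sum]
      simp only [sum_const, nsmul_eq_mul, mul_one]
      congr 1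
      exact sum_congr rfl fun i _ => by ring
    rw [h, sub_nonneg, div_mul_eq_mul_div]
    exact div_le_of_le_mul₀ hS (by positivity) (card_mul_sum_filter_inv_le hu hpos s hP)
  intro a (ha : 0 < a) b _ hab
  simp only [sum_filter_optimalFreq, ← hSdef]
  gcongr

end Order

lemma accPt_principal_Ioc {α : Type*} [LinearOrder α] [TopologicalSpace α] [OrderTopology α]
    [DenselyOrdered α] [NoMinOrder α] {a b x : α} (hx : x ∈ Set.Ioc a b) :
    AccPt x (Filter.principal (Set.Ioc a b)) := by
  refine accPt_iff_frequently.2 <|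
    (Filter.Eventually.frequently (f := nhdsWithin x (Set.Iio x)) ?_).filter_mono
      nhdsWithin_le_nhds
  filter_upwards [Ioo_mem_nhdsLT hx.1] with y hy
  exact ⟨hy.2.ne, hy.1, hy.2.le.trans hx.2⟩

theorem stmt8_general (m : ℕ) (u : Fin m → ℝ)
    (hdec : ∀ i j : Fin m, i ≤ j → u j ≤ u i) (hpos : ∀ i, 0 < u i)
    (x : ℝ → Fin m → ℝ)
    (hmax : ∀ γ, 0 < γ → γ ≤ 1 → x γ ∈ stdSimplex ℝ (Fin m) ∧
      ∀ y ∈ stdSimplex ℝ (Fin m),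
        ∑ i, y i * (1 - γ * y i) * u i ≤ ∑ i, x γ i * (1 - γ * x γ i) * u i)
    (kstar : ℕ)
    (hsupp : ∀ γ, 0 < γ → γ ≤ 1 → ∀ i : Fin m, (0 < x γ i ↔ (i : ℕ) < kstar))
    (x' : ℝ → Fin m → ℝ)
    (hderiv : ∀ γ, 0 < γ → γ ≤ 1 → ∀ i : Fin m,
      HasDerivAt (fun g => x g i) (x' γ i) γ) :
    ∀ γ, 0 < γ → γ ≤ 1 → ∀ k ≤ m,
      (∑ i : Fin m, if (i : ℕ) < k then x' γ i else 0) ≤ 0 := by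
  intro γ hγ₀ hγ₁ k _
  set s : Finset (Fin m) := {i | (i : ℕ) < kstar}
  have hx : ∀ t ∈ Set.Ioc (0 : ℝ) 1, x t = optimalFreq s u t := fun t ⟨ht₀, ht₁⟩ =>
    eq_optimalFreq_of_forall_le ht₀.ne' (fun i _ => hpos i) (hmax t ht₀ ht₁).1
      (hmax t ht₀ ht₁).2 (by simpa [s] using hsupp t ht₀ ht₁)
  have hanti : AntitoneOn (fun t => ∑ i : Fin m with i.val < k, x t i) (Set.Ioc 0 1) :=
    ((antitoneOn_sum_filter_optimalFreq (P := fun i : Fin m => i.val < k) (fun i j => hdec i j)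
      hpos s fun i j hij hj => lt_of_le_of_lt hij hj).mono Set.Ioc_subset_Ioi_self).congr
      fun t ht => by simp only [hx t ht]
  rw [← sum_filter]
  exact (HasDerivAt.fun_sum fun i _ => hderiv γ hγ₀ hγ₁ i).hasDerivWithinAt.nonpos_of_antitoneOn
    (accPt_principal_Ioc ⟨hγ₀, hγ₁⟩) hanti

theorem stmt8 (m : ℕ) (hm : 1 ≤ m) (u : Fin m → ℝ)
    (hdec : ∀ i j : Fin m, i ≤ j → u j ≤ u i) (hpos : ∀ i, 0 < u i)
    (x : ℝ → Fin m → ℝ)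
    (hmax : ∀ γ, 0 < γ → γ ≤ 1 → x γ ∈ stdSimplex ℝ (Fin m) ∧
      ∀ y ∈ stdSimplex ℝ (Fin m),
        ∑ i, y i * (1 - γ * y i) * u i ≤ ∑ i, x γ i * (1 - γ * x γ i) * u i)
    (kstar : ℕ) (hk : kstar ≤ m)
    (hsupp : ∀ γ, 0 < γ → γ ≤ 1 → ∀ i : Fin m, (0 < x γ i ↔ (i : ℕ) < kstar))
    (x' : ℝ → Fin m → ℝ)
    (hderiv : ∀ γ, 0 < γ → γ ≤ 1 → ∀ i : Fin m,
      HasDerivAt (fun g => x g i) (x' γ i) γ) :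
    ∀ γ, 0 < γ → γ ≤ 1 → ∀ k ≤ m,
      (∑ i : Fin m, if (i : ℕ) < k then x' γ i else 0) ≤ 0 :=
  stmt8_general m u hdec hpos x hmax kstar hsupp x' hderiv
end

section
/- Let A be a finite set, u : A → [0,∞), γ ∈ (0,1], and v^T_γ = max over all histories of length T of U^T_γ. Then the sequence (v^T_γ)_{T≥1} converges as T → ∞. -/
open Finset Filter

/-- Average fatigued payoff of history `a` over the first `T` periods. -/
noncomputable def avgU {A : Type*} [DecidableEq A] (u : A → ℝ) (γ : ℝ) (a : ℕ → A)
    (T : ℕ) : ℝ :=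
  (∑ t ∈ Finset.Icc 1 T, (1 - γ * freq a (a t) (t - 1)) * u (a t)) / T

/-- `v^T_γ`: the best average payoff achievable in `T` periods (as `avgU` only
depends on the first `T` actions, the supremum over infinite histories is a
maximum over histories of length `T`). -/
noncomputable def vT {A : Type*} [DecidableEq A] (u : A → ℝ) (γ : ℝ) (T : ℕ) : ℝ :=
  ⨆ a : ℕ → A, avgU u γ a T

/-!
Playing each action of a history of length `T` in a block of `k` consecutive periods keeps
every empirical frequency within `O(1/t)` of the original one during block `t`, so the
stretched history of length `kT` earns on average at least what the original earned, up to an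
error that is `o(1)` as `T → ∞` and independent of `k`. Since payoffs are nonnegative and bounded, truncating it to any `N` with
`kT ≤ N < (k + 1)T` loses only `O(T/N)`. Hence `v^N_γ ≥ v^T_γ - o(1) - O(T/N)`, which forces
`liminf v^N_γ ≥ limsup v^T_γ`.
-/

theorem Finset.sum_Icc_one_eq_sum_range {M : Type*} [AddCommMonoid M] (f : ℕ → M) (n : ℕ) :
    ∑ t ∈ Icc 1 n, f t = ∑ i ∈ range n, f (i + 1) := by
  rw [← Finset.Ico_add_one_right_eq_Icc, sum_Ico_eq_sum_range, Nat.add_sub_cancel]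
  simp only [add_comm]

theorem Finset.sum_range_mul_comp_div {M : Type*} [AddCommMonoid M] (g : ℕ → M) (k T : ℕ) :
    ∑ i ∈ range (k * T), g (i / k) = k • ∑ t ∈ range T, g t := by
  induction T with
  | zero => simp
  | succ T ih =>
    have hblock : ∀ j ∈ range k, g ((k * T + j) / k) = g T := fun j hj => by
      have hj : j < k := mem_range.mp hj
      rw [Nat.mul_add_div (Nat.zero_lt_of_lt hj), Nat.div_eq_of_lt hj, add_zero]
    rw [mul_add_one, sum_range_add, ih, sum_congr rfl hblock, sum_const, card_range,
      sum_range_succ, smul_add]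

theorem exists_tendsto_of_le_add {f e : ℕ → ℝ} {C : ℝ} (hf : BddAbove (Set.range f))
    (he : Tendsto e atTop (nhds 0))
    (h : ∀ T N, 0 < T → T ≤ N → f T ≤ f N + e T + C * T / N) :
    ∃ L, Tendsto f atTop (nhds L) := by
  have hU : IsBoundedUnder (· ≤ ·) atTop f := hf.isBoundedUnder_of_range
  have hL : IsBoundedUnder (· ≥ ·) atTop f := by
    refine isBoundedUnder_of_eventually_ge (a := f 1 - e 1 - |C|) ?_
    filter_upwards [eventually_ge_atTop 1] with N hN
    have hCN : C * (1 : ℕ) / N ≤ |C| := by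
      rw [Nat.cast_one, mul_one]
      calc C / N ≤ |C| / N := by gcongr; exact le_abs_self C
        _ ≤ |C| := div_le_self (abs_nonneg C) (by exact_mod_cast hN)
    linarith [h 1 N one_pos hN]
  refine ⟨liminf f atTop, tendsto_of_le_liminf_of_limsup_le le_rfl ?_ hU hL⟩
  refine le_of_forall_pos_le_add fun ε hε => limsup_le_of_le hL.isCoboundedUnder_le ?_
  filter_upwards [he.eventually_lt_const (half_pos hε), eventually_gt_atTop 0] with T heT hT
  have hlater : ∀ᶠ N in atTop, f T - ε ≤ f N := by
    filter_upwards [(tendsto_const_div_atTop_nhds_zero_nat (C * T)).eventually_lt_const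
      (half_pos hε), eventually_ge_atTop T] with N hCN hTN
    linarith [h T N hT hTN]
  linarith [le_liminf_of_le hU.isCoboundedUnder_ge hlater]

section Fatigue
variable {A : Type*}

/-- Each action of `a` repeated `k` times; periods are numbered from `1`. -/
def stretch (k : ℕ) (a : ℕ → A) (s : ℕ) : A := a ((s - 1) / k + 1)

section Count
variable [DecidableEq A]

def count (a : ℕ → A) (b : A) (t : ℕ) : ℝ :=
  ∑ s ∈ Icc 1 t, if a s = b then 1 else 0

theorem freq_eq_count_div (a : ℕ → A) (b : A) (t : ℕ) : freq a b t = count a b t / t := by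
  unfold freq count
  split_ifs with ht <;> simp [ht]

theorem count_nonneg (a : ℕ → A) (b : A) (t : ℕ) : 0 ≤ count a b t :=
  sum_nonneg fun _ _ => by positivity

theorem count_le (a : ℕ → A) (b : A) (t : ℕ) : count a b t ≤ t :=
  (sum_le_card_nsmul _ _ 1 fun _ _ => by split_ifs <;> norm_num).trans (by simp)

theorem count_mono (a : ℕ → A) (b : A) : Monotone (count a b) := fun _ _ hst =>
  sum_le_sum_of_subset_of_nonneg (Icc_subset_Icc_right hst) fun _ _ _ => by positivity

theorem count_succ_le (a : ℕ → A) (b : A) (t : ℕ) : count a b (t + 1) ≤ count a b t + 1 := by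
  rw [count, count, sum_Icc_succ_top (Nat.le_add_left 1 t)]
  exact add_le_add le_rfl (by split_ifs <;> norm_num)

theorem count_stretch (k : ℕ) (a : ℕ → A) (b : A) (q : ℕ) :
    count (stretch k a) b (k * q) = k * count a b q := by
  simp only [count, stretch, sum_Icc_one_eq_sum_range, Nat.add_sub_cancel]
  rw [sum_range_mul_comp_div (fun t => if a (t + 1) = b then (1 : ℝ) else 0), nsmul_eq_mul]

theorem freq_nonneg (a : ℕ → A) (b : A) (t : ℕ) : 0 ≤ freq a b t := by
  rw [freq_eq_count_div]
  exact div_nonneg (count_nonneg a b t) t.cast_nonneg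

theorem freq_le_one (a : ℕ → A) (b : A) (t : ℕ) : freq a b t ≤ 1 := by
  rw [freq_eq_count_div]
  exact div_le_one_of_le₀ (count_le a b t) t.cast_nonneg

/-- Within `n` periods the stretched history completes `n / k` blocks and starts at most one
more, so its counts are at most `k` times those of `a` after `n / k + 1` periods. -/
theorem freq_stretch_le {k : ℕ} (hk : 0 < k) (a : ℕ → A) (b : A) (n : ℕ) :
    freq (stretch k a) b n ≤ freq a b (n / k) + 2 / ((n / k : ℕ) + 1) := by
  obtain hq | hq := Nat.eq_zero_or_pos (n / k)
  · rw [hq, freq_eq_count_div a b 0]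
    norm_num
    linarith [freq_le_one (stretch k a) b n]
  set q := n / k
  have hkq : k * q ≤ n := Nat.mul_div_le n k
  have hn : n < k * (q + 1) := Nat.lt_mul_div_succ n hk
  have hcount : count (stretch k a) b n ≤ k * (count a b q + 1) := by
    calc count (stretch k a) b n ≤ count (stretch k a) b (k * (q + 1)) := count_mono _ _ hn.le
      _ = k * count a b (q + 1) := count_stretch k a b (q + 1)
      _ ≤ k * (count a b q + 1) := by gcongr; exact count_succ_le a b q
  have hkq' : (k : ℝ) * q ≤ n := by exact_mod_cast hkq
  have hkpos : (0 : ℝ) < k := by exact_mod_cast hk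
  have hqpos : (0 : ℝ) < q := by exact_mod_cast hq
  rw [freq_eq_count_div, freq_eq_count_div]
  calc count (stretch k a) b n / n ≤ k * (count a b q + 1) / (k * q) :=
        div_le_div₀ (by have := count_nonneg a b q; positivity) hcount (by positivity) hkq'
    _ = count a b q / q + 1 / q := by field_simp
    _ ≤ count a b q / q + 2 / (q + 1) := by
        refine add_le_add le_rfl ?_
        rw [div_le_div_iff₀ hqpos (by positivity)]
        linarith [(Nat.one_le_cast (α := ℝ)).mpr hq]

end Count

/-- Cesàro mean of the frequency errors `2 / (t + 1)` of `freq_stretch_le`. -/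
noncomputable def stretchError (T : ℕ) : ℝ := (T : ℝ)⁻¹ * ∑ t ∈ range T, 2 / ((t : ℝ) + 1)

theorem tendsto_stretchError : Tendsto stretchError atTop (nhds 0) := by
  have h := (tendsto_one_div_add_atTop_nhds_zero_nat.const_mul (2 : ℝ)).cesaro
  unfold stretchError
  simpa only [mul_zero, mul_one_div] using h

section Payoff
variable [DecidableEq A] {u : A → ℝ} {γ M : ℝ}

variable (u γ) in
noncomputable def payoff (a : ℕ → A) (t : ℕ) : ℝ := (1 - γ * freq a (a t) (t - 1)) * u (a t)

variable (u γ) in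
theorem avgU_eq (a : ℕ → A) (T : ℕ) :
    avgU u γ a T = (∑ i ∈ range T, payoff u γ a (i + 1)) / T := by
  rw [avgU, sum_Icc_one_eq_sum_range]
  rfl

variable (u γ) in
theorem mul_avgU (a : ℕ → A) (T : ℕ) :
    T * avgU u γ a T = ∑ i ∈ range T, payoff u γ a (i + 1) := by
  rcases Nat.eq_zero_or_pos T with rfl | hT
  · simp
  · rw [avgU_eq, mul_div_cancel₀ _ (by positivity)]

theorem payoff_nonneg (hu : ∀ x, 0 ≤ u x) (hγ : γ ≤ 1) (a : ℕ → A) (t : ℕ) :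
    0 ≤ payoff u γ a t := by
  have h0 := freq_nonneg a (a t) (t - 1)
  have h1 := freq_le_one a (a t) (t - 1)
  exact mul_nonneg (by nlinarith) (hu _)

theorem payoff_le (hu : ∀ x, 0 ≤ u x) (huM : ∀ x, u x ≤ M) (hγ : 0 ≤ γ) (a : ℕ → A)
    (t : ℕ) : payoff u γ a t ≤ M := by
  have h0 := freq_nonneg a (a t) (t - 1)
  calc payoff u γ a t ≤ 1 * u (a t) :=
        mul_le_mul_of_nonneg_right (by nlinarith) (hu _)
    _ ≤ M := (one_mul _).trans_le (huM _)

theorem payoff_stretch_ge {k : ℕ} (hk : 0 < k) (hu : ∀ x, 0 ≤ u x) (huM : ∀ x, u x ≤ M)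
    (hγ : 0 ≤ γ) (a : ℕ → A) (i : ℕ) :
    payoff u γ a (i / k + 1) - γ * M * (2 / ((i / k : ℕ) + 1))
      ≤ payoff u γ (stretch k a) (i + 1) := by
  set x := a (i / k + 1)
  have hx : stretch k a (i + 1) = x := by simp [stretch, x]
  have hfreq := freq_stretch_le hk a x i
  simp only [payoff, hx, Nat.add_sub_cancel]
  have hd : 0 ≤ 2 / ((i / k : ℕ) + 1 : ℝ) := by positivity
  nlinarith [mul_le_mul_of_nonneg_left (mul_le_mul_of_nonneg_left (huM x) hd) hγ,
    mul_le_mul_of_nonneg_left (mul_le_mul_of_nonneg_right hfreq (hu x)) hγ]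

theorem avgU_le_avgU_stretch {k : ℕ} (hk : 0 < k) (hu : ∀ x, 0 ≤ u x) (huM : ∀ x, u x ≤ M)
    (hγ : 0 ≤ γ) (a : ℕ → A) (T : ℕ) :
    avgU u γ a T ≤ avgU u γ (stretch k a) (k * T) + γ * M * stretchError T := by
  rcases Nat.eq_zero_or_pos T with rfl | hT
  · simp [avgU, stretchError]
  set S := ∑ t ∈ range T, payoff u γ a (t + 1)
  set E := ∑ t ∈ range T, 2 / ((t : ℝ) + 1)
  have hsum : k * (S - γ * M * E) ≤ ∑ i ∈ range (k * T), payoff u γ (stretch k a) (i + 1) := by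
    calc (k : ℝ) * (S - γ * M * E)
        = ∑ i ∈ range (k * T), (payoff u γ a (i / k + 1) - γ * M * (2 / ((i / k : ℕ) + 1))) := by
          rw [sum_range_mul_comp_div (fun t => payoff u γ a (t + 1) - γ * M * (2 / ((t : ℝ) + 1))),
            nsmul_eq_mul, sum_sub_distrib, ← mul_sum]
      _ ≤ _ := sum_le_sum fun i _ => payoff_stretch_ge hk hu huM hγ a i
  have hk' : (0 : ℝ) < k := by exact_mod_cast hk
  have hT' : (0 : ℝ) < T := by exact_mod_cast hT
  rw [avgU_eq, avgU_eq, stretchError, ← sub_le_iff_le_add, Nat.cast_mul, le_div_iff₀ (by positivity)]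
  calc (S / T - γ * M * ((T : ℝ)⁻¹ * E)) * (k * T) = k * (S - γ * M * E) := by field_simp
    _ ≤ _ := hsum

theorem avgU_nonneg (hu : ∀ x, 0 ≤ u x) (hγ : γ ≤ 1) (a : ℕ → A) (T : ℕ) :
    0 ≤ avgU u γ a T := by
  rw [avgU_eq]
  exact div_nonneg (sum_nonneg fun i _ => payoff_nonneg hu hγ a (i + 1)) T.cast_nonneg

theorem avgU_le (hu : ∀ x, 0 ≤ u x) (huM : ∀ x, u x ≤ M) (hγ : 0 ≤ γ) (a : ℕ → A) (T : ℕ) :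
    avgU u γ a T ≤ M := by
  have hM : 0 ≤ M := (hu (a 0)).trans (huM _)
  rw [avgU_eq]
  refine div_le_of_le_mul₀ T.cast_nonneg hM ?_
  calc ∑ i ∈ range T, payoff u γ a (i + 1) ≤ #(range T) • M :=
        sum_le_card_nsmul _ _ _ fun i _ => payoff_le hu huM hγ a (i + 1)
    _ = M * T := by rw [card_range, nsmul_eq_mul, mul_comm]

theorem mul_avgU_le_mul_avgU (hu : ∀ x, 0 ≤ u x) (hγ : γ ≤ 1) (a : ℕ → A) {m N : ℕ}
    (hmN : m ≤ N) : m * avgU u γ a m ≤ N * avgU u γ a N := by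
  rw [mul_avgU, mul_avgU]
  exact sum_le_sum_of_subset_of_nonneg (range_subset_range.mpr hmN) fun i _ _ =>
    payoff_nonneg hu hγ a (i + 1)

theorem avgU_le_avgU_add (hu : ∀ x, 0 ≤ u x) (huM : ∀ x, u x ≤ M) (hγ0 : 0 ≤ γ) (hγ1 : γ ≤ 1)
    (a : ℕ → A) {m N T : ℕ} (hmN : m ≤ N) (hNm : N ≤ m + T) :
    avgU u γ a m ≤ avgU u γ a N + M * T / N := by
  rcases Nat.eq_zero_or_pos N with rfl | hN
  · obtain rfl : m = 0 := Nat.le_zero.mp hmN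
    simp
  have hmono := mul_avgU_le_mul_avgU hu hγ1 a hmN
  have hX0 := avgU_nonneg hu hγ1 a m
  have hXM := avgU_le hu huM hγ0 a m
  have hNm' : (N : ℝ) ≤ m + T := by exact_mod_cast hNm
  rw [← sub_le_iff_le_add', le_div_iff₀ (by positivity)]
  nlinarith

theorem bddAbove_range_avgU (hu : ∀ x, 0 ≤ u x) (huM : ∀ x, u x ≤ M) (hγ : 0 ≤ γ) (T : ℕ) :
    BddAbove (Set.range fun a : ℕ → A => avgU u γ a T) :=
  ⟨M, Set.forall_mem_range.mpr fun a => avgU_le hu huM hγ a T⟩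

theorem vT_nonneg (hu : ∀ x, 0 ≤ u x) (hγ : γ ≤ 1) (T : ℕ) : 0 ≤ vT (A := A) u γ T :=
  Real.iSup_nonneg fun a => avgU_nonneg hu hγ a T

theorem vT_le (hu : ∀ x, 0 ≤ u x) (huM : ∀ x, u x ≤ M) (hM : 0 ≤ M) (hγ : 0 ≤ γ) (T : ℕ) :
    vT (A := A) u γ T ≤ M :=
  Real.iSup_le (fun a => avgU_le hu huM hγ a T) hM

/-- Any history of length `T`, stretched by `k = N / T` and truncated to `N` periods, witnesses
the bound. -/
theorem vT_le_vT_add (hu : ∀ x, 0 ≤ u x) (huM : ∀ x, u x ≤ M) (hM : 0 ≤ M) (hγ0 : 0 ≤ γ)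
    (hγ1 : γ ≤ 1) {T N : ℕ} (hT : 0 < T) (hTN : T ≤ N) :
    vT (A := A) u γ T ≤ vT u γ N + γ * M * stretchError T + M * T / N := by
  have hbound : 0 ≤ vT (A := A) u γ N + γ * M * stretchError T + M * T / N := by
    have := vT_nonneg (A := A) hu hγ1 N
    have : 0 ≤ stretchError T := by unfold stretchError; positivity
    positivity
  refine Real.iSup_le (fun a => ?_) hbound
  set k := N / T
  have hk : 0 < k := Nat.div_pos hTN hT
  have hkT : k * T ≤ N := Nat.div_mul_le_self N T
  have hNk : N ≤ k * T + T := (Nat.lt_div_mul_add hT).le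
  have hvN : avgU u γ (stretch k a) N ≤ vT u γ N :=
    le_ciSup (bddAbove_range_avgU hu huM hγ0 N) (stretch k a)
  linarith [avgU_le_avgU_stretch hk hu huM hγ0 a T,
    avgU_le_avgU_add hu huM hγ0 hγ1 (stretch k a) hkT hNk]

end Payoff

end Fatigue

theorem stmt12_general {A : Type*} [Fintype A] [DecidableEq A]
    (u : A → ℝ) (hu : ∀ x, 0 ≤ u x) (γ : ℝ) (hγ : 0 < γ ∧ γ ≤ 1) :
    ∃ L : ℝ, Tendsto (fun T => vT (A := A) u γ T) atTop (nhds L) := by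
  obtain ⟨hγ0, hγ1⟩ := hγ
  set M := ∑ x, u x
  have huM : ∀ x, u x ≤ M := fun x => single_le_sum (fun y _ => hu y) (mem_univ x)
  have hM : 0 ≤ M := sum_nonneg fun x _ => hu x
  refine exists_tendsto_of_le_add (e := fun T => γ * M * stretchError T) (C := M) ?_ ?_
    fun T N hT hTN => vT_le_vT_add hu huM hM hγ0.le hγ1 hT hTN
  · exact ⟨M, Set.forall_mem_range.mpr (vT_le hu huM hM hγ0.le)⟩
  · simpa only [mul_zero] using tendsto_stretchError.const_mul (γ * M)

theorem stmt12 {A : Type*} [Fintype A] [DecidableEq A] [Nonempty A]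
    (u : A → ℝ) (hu : ∀ x, 0 ≤ u x) (γ : ℝ) (hγ : 0 < γ ∧ γ ≤ 1) :
    ∃ L : ℝ, Tendsto (fun T => vT (A := A) u γ T) atTop (nhds L) :=
  stmt12_general u hu γ hγ
end
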